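/- arXiv:2408.05630 — 7 statements merged into one kernel-verified Lean document; each statement's English description precedes it below -/
import Mathlib

section
/- Let (A_1,B_1),...,(A_m,B_m) be pairs of subsets of [n] with A_i ∩ B_i = ∅ for all i, |A_i| = a, |B_i| = b for all i, and A_i ∩ B_j ≠ ∅ whenever i ≠ j. Then m ≤ C(a+b, a). -/
open Finset

private lemma oio_coe_congr {n k : ℕ} {s t : Finset (Fin n)} (hst : s = t)
    (hs : s.card = k) (ht : t.card = k) (j : Fin k) :
    (↑(s.orderIsoOfFin hs j) : Fin n) = ↑(t.orderIsoOfFin ht j) := by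
  subst hst; rfl

private lemma oio_symm_congr {n k : ℕ} {s t : Finset (Fin n)} (hst : s = t)
    (hs : s.card = k) (ht : t.card = k) (z : Fin n) (hz : z ∈ s) (hz' : z ∈ t) :
    ((s.orderIsoOfFin hs).symm ⟨z, hz⟩ : Fin k) = (t.orderIsoOfFin ht).symm ⟨z, hz'⟩ := by
  subst hst; rfl

section SortFun

variable {n a b : ℕ} {A B : Finset (Fin n)} (σ : Equiv.Perm (Fin n))
  (hP : #((A ∪ B).image σ) = a + b) (hta : #(A.image σ) = a) (htb : #(B.image σ) = b)

noncomputable def sortFun (x : Fin n) : Fin n :=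
  if hx : x ∈ A then
    ↑(((A ∪ B).image σ).orderIsoOfFin hP
      (Fin.castAdd b (((A.image σ).orderIsoOfFin hta).symm ⟨σ x, mem_image_of_mem σ hx⟩)))
  else if hx' : x ∈ B then
    ↑(((A ∪ B).image σ).orderIsoOfFin hP
      (Fin.natAdd a (((B.image σ).orderIsoOfFin htb).symm ⟨σ x, mem_image_of_mem σ hx'⟩)))
  else σ x

lemma sortFun_of_memA {x : Fin n} (hx : x ∈ A) :
    sortFun σ hP hta htb x = ↑(((A ∪ B).image σ).orderIsoOfFin hP
      (Fin.castAdd b (((A.image σ).orderIsoOfFin hta).symm ⟨σ x, mem_image_of_mem σ hx⟩))) := by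
  simp [sortFun, hx]

lemma sortFun_of_memB (hd : A ∩ B = ∅) {x : Fin n} (hx : x ∈ B) :
    sortFun σ hP hta htb x = ↑(((A ∪ B).image σ).orderIsoOfFin hP
      (Fin.natAdd a (((B.image σ).orderIsoOfFin htb).symm ⟨σ x, mem_image_of_mem σ hx⟩))) := by
  have hxA : x ∉ A := fun h => by
    have : x ∈ A ∩ B := mem_inter.mpr ⟨h, hx⟩
    simp [hd] at this
  simp [sortFun, hxA, hx]

lemma sortFun_of_not_mem {x : Fin n} (hx : x ∉ A ∪ B) :
    sortFun σ hP hta htb x = σ x := by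
  rw [mem_union] at hx
  push_neg at hx
  simp [sortFun, hx.1, hx.2]

lemma sortFun_mem_of_mem (hd : A ∩ B = ∅) {x : Fin n} (hx : x ∈ A ∪ B) :
    sortFun σ hP hta htb x ∈ (A ∪ B).image σ := by
  rcases mem_union.mp hx with h | h
  · rw [sortFun_of_memA σ hP hta htb h]; exact coe_mem _
  · rw [sortFun_of_memB σ hP hta htb hd h]; exact coe_mem _

lemma sortFun_not_mem_of_not_mem {x : Fin n} (hx : x ∉ A ∪ B) :
    sortFun σ hP hta htb x ∉ (A ∪ B).image σ := by
  rw [sortFun_of_not_mem σ hP hta htb hx]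
  intro h
  obtain ⟨y, hy, hyx⟩ := mem_image.mp h
  exact hx (σ.injective hyx ▸ hy)

lemma sortFun_injective (hd : A ∩ B = ∅) :
    Function.Injective (sortFun σ hP hta htb) := by
  intro x y hxy
  by_cases hxA : x ∈ A
  · by_cases hyA : y ∈ A
    · rw [sortFun_of_memA σ hP hta htb hxA, sortFun_of_memA σ hP hta htb hyA] at hxy
      have h1 := (((A ∪ B).image σ).orderIsoOfFin hP).injective (Subtype.coe_injective hxy)
      have h2 : (((A.image σ).orderIsoOfFin hta).symm ⟨σ x, mem_image_of_mem σ hxA⟩)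
          = (((A.image σ).orderIsoOfFin hta).symm ⟨σ y, mem_image_of_mem σ hyA⟩) := by
        exact Fin.castAdd_injective _ _ h1
      have h3 := ((A.image σ).orderIsoOfFin hta).symm.injective h2
      exact σ.injective (congrArg Subtype.val h3)
    · by_cases hyB : y ∈ B
      · rw [sortFun_of_memA σ hP hta htb hxA, sortFun_of_memB σ hP hta htb hd hyB] at hxy
        have h1 := (((A ∪ B).image σ).orderIsoOfFin hP).injective (Subtype.coe_injective hxy)
        exfalso
        have := congrArg Fin.val h1
        simp at this
        omega
      · have hyU : y ∉ A ∪ B := by simp [hyA, hyB]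
        exact absurd (hxy ▸ sortFun_mem_of_mem σ hP hta htb hd (mem_union_left B hxA))
          (sortFun_not_mem_of_not_mem σ hP hta htb hyU)
  · by_cases hxB : x ∈ B
    · by_cases hyA : y ∈ A
      · rw [sortFun_of_memB σ hP hta htb hd hxB, sortFun_of_memA σ hP hta htb hyA] at hxy
        have h1 := (((A ∪ B).image σ).orderIsoOfFin hP).injective (Subtype.coe_injective hxy)
        exfalso
        have := congrArg Fin.val h1
        simp at this
        omega
      · by_cases hyB : y ∈ B
        · rw [sortFun_of_memB σ hP hta htb hd hxB, sortFun_of_memB σ hP hta htb hd hyB] at hxy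
          have h1 := (((A ∪ B).image σ).orderIsoOfFin hP).injective (Subtype.coe_injective hxy)
          have h2 : (((B.image σ).orderIsoOfFin htb).symm ⟨σ x, mem_image_of_mem σ hxB⟩)
              = (((B.image σ).orderIsoOfFin htb).symm ⟨σ y, mem_image_of_mem σ hyB⟩) := by
            have hv := congrArg Fin.val h1
            simp [Fin.natAdd] at hv
            exact Fin.ext (by omega)
          have h3 := ((B.image σ).orderIsoOfFin htb).symm.injective h2
          exact σ.injective (congrArg Subtype.val h3)
        · have hyU : y ∉ A ∪ B := by simp [hyA, hyB]
          exact absurd (hxy ▸ sortFun_mem_of_mem σ hP hta htb hd (mem_union_right A hxB))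
            (sortFun_not_mem_of_not_mem σ hP hta htb hyU)
    · have hxU : x ∉ A ∪ B := by simp [hxA, hxB]
      by_cases hyU : y ∈ A ∪ B
      · exact absurd (hxy ▸ sortFun_mem_of_mem σ hP hta htb hd hyU)
          (sortFun_not_mem_of_not_mem σ hP hta htb hxU)
      · rw [sortFun_of_not_mem σ hP hta htb hxU, sortFun_of_not_mem σ hP hta htb hyU] at hxy
        exact σ.injective hxy

lemma sortFun_lt (hd : A ∩ B = ∅) {x y : Fin n} (hx : x ∈ A) (hy : y ∈ B) :
    sortFun σ hP hta htb x < sortFun σ hP hta htb y := by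
  rw [sortFun_of_memA σ hP hta htb hx, sortFun_of_memB σ hP hta htb hd hy]
  have : (Fin.castAdd b (((A.image σ).orderIsoOfFin hta).symm ⟨σ x, mem_image_of_mem σ hx⟩))
      < (Fin.natAdd a (((B.image σ).orderIsoOfFin htb).symm ⟨σ y, mem_image_of_mem σ hy⟩)) := by
    simp [Fin.lt_def]
    omega
  exact (((A ∪ B).image σ).orderIsoOfFin hP).lt_iff_lt.mpr this

lemma sortFun_image_union (hd : A ∩ B = ∅) :
    (A ∪ B).image (sortFun σ hP hta htb) = (A ∪ B).image σ := by
  apply eq_of_subset_of_card_le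
  · intro z hz
    obtain ⟨x, hx, hxz⟩ := mem_image.mp hz
    exact hxz ▸ sortFun_mem_of_mem σ hP hta htb hd hx
  · rw [card_image_of_injective _ (sortFun_injective σ hP hta htb hd)]
    exact card_image_le

end SortFun

section Count

variable {n a b : ℕ} {A B : Finset (Fin n)}

lemma key_set_image (σ : Equiv.Perm (Fin n)) (hP : #((A ∪ B).image σ) = a + b) :
    (univ.filter (fun j : Fin (a+b) =>
        ↑(((A ∪ B).image σ).orderIsoOfFin hP j) ∈ A.image σ)).image
      (fun j => (↑(((A ∪ B).image σ).orderIsoOfFin hP j) : Fin n)) = A.image σ := by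
  ext z
  simp only [mem_image, mem_filter, mem_univ, true_and]
  constructor
  · rintro ⟨j, hj, rfl⟩; exact hj
  · intro hz
    have hz2 : z ∈ A.image σ := mem_image.mpr hz
    have hzP : z ∈ (A ∪ B).image σ := image_subset_image subset_union_left hz2
    exact ⟨(((A ∪ B).image σ).orderIsoOfFin hP).symm ⟨z, hzP⟩, by simpa using hz2, by simp⟩

lemma key_set_card (σ : Equiv.Perm (Fin n)) (hP : #((A ∪ B).image σ) = a + b)
    (hta : #(A.image σ) = a) :
    #(univ.filter (fun j : Fin (a+b) =>
        ↑(((A ∪ B).image σ).orderIsoOfFin hP j) ∈ A.image σ)) = a := by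
  have hinj : Function.Injective
      (fun j : Fin (a+b) => (↑(((A ∪ B).image σ).orderIsoOfFin hP j) : Fin n)) :=
    Subtype.coe_injective.comp (((A ∪ B).image σ).orderIsoOfFin hP).injective
  rw [← card_image_of_injective _ hinj, key_set_image σ hP, hta]

lemma perm_count (hd : A ∩ B = ∅) (hA : #A = a) (hB : #B = b) :
    n.factorial ≤
      #(univ.filter (fun σ : Equiv.Perm (Fin n) => ∀ x ∈ A, ∀ y ∈ B, σ x < σ y))
        * (a + b).choose a := by
  classical
  have hd' : Disjoint A B := disjoint_iff_inter_eq_empty.mpr hd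
  have hta : ∀ σ : Equiv.Perm (Fin n), #(A.image σ) = a := fun σ => by
    rw [card_image_of_injective _ σ.injective, hA]
  have htb : ∀ σ : Equiv.Perm (Fin n), #(B.image σ) = b := fun σ => by
    rw [card_image_of_injective _ σ.injective, hB]
  have hP : ∀ σ : Equiv.Perm (Fin n), #((A ∪ B).image σ) = a + b := fun σ => by
    rw [card_image_of_injective _ σ.injective, card_union_of_disjoint hd', hA, hB]
  set S := univ.filter (fun σ : Equiv.Perm (Fin n) => ∀ x ∈ A, ∀ y ∈ B, σ x < σ y) with hSdef
  set T := powersetCard a (univ : Finset (Fin (a+b))) with hTdef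
  let F : Equiv.Perm (Fin n) → Equiv.Perm (Fin n) × Finset (Fin (a+b)) := fun σ =>
    (Equiv.ofBijective _
        (Finite.injective_iff_bijective.mp (sortFun_injective σ (hP σ) (hta σ) (htb σ) hd)),
     univ.filter (fun j => ↑(((A ∪ B).image σ).orderIsoOfFin (hP σ) j) ∈ A.image σ))
  have hmaps : ∀ σ, F σ ∈ S ×ˢ T := by
    intro σ
    rw [mem_product]
    constructor
    · rw [hSdef, mem_filter]
      refine ⟨mem_univ _, fun x hx y hy => ?_⟩
      exact sortFun_lt σ (hP σ) (hta σ) (htb σ) hd hx hy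
    · rw [hTdef, mem_powersetCard]
      exact ⟨subset_univ _, key_set_card σ (hP σ) (hta σ)⟩
  have hinj : Function.Injective F := by
    intro σ₁ σ₂ h
    rw [Prod.ext_iff] at h
    obtain ⟨h1, h2⟩ := h
    simp only [F] at h1 h2
    have hf : ∀ x, sortFun σ₁ (hP σ₁) (hta σ₁) (htb σ₁) x
        = sortFun σ₂ (hP σ₂) (hta σ₂) (htb σ₂) x := fun x =>
      congrArg (fun e : Equiv.Perm (Fin n) => e x) h1
    have hPeq : (A ∪ B).image σ₁ = (A ∪ B).image σ₂ := by
      rw [← sortFun_image_union σ₁ (hP σ₁) (hta σ₁) (htb σ₁) hd,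
        ← sortFun_image_union σ₂ (hP σ₂) (hta σ₂) (htb σ₂) hd]
      exact image_congr fun x _ => hf x
    have htAeq : A.image σ₁ = A.image σ₂ := by
      rw [← key_set_image (B := B) σ₁ (hP σ₁), ← key_set_image (B := B) σ₂ (hP σ₂), h2]
      exact image_congr fun j _ => oio_coe_congr hPeq (hP σ₁) (hP σ₂) j
    have htBeq : B.image σ₁ = B.image σ₂ := by
      have e1 : ∀ σ : Equiv.Perm (Fin n), B.image σ = ((A ∪ B).image σ) \ (A.image σ) := by
        intro σ
        rw [image_union, union_sdiff_cancel_left ((disjoint_image σ.injective).mpr hd')]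
      rw [e1 σ₁, e1 σ₂, hPeq, htAeq]
    apply Equiv.ext
    intro x
    by_cases hx : x ∈ A
    · have h := hf x
      rw [sortFun_of_memA σ₁ (hP σ₁) (hta σ₁) (htb σ₁) hx,
        sortFun_of_memA σ₂ (hP σ₂) (hta σ₂) (htb σ₂) hx,
        ← oio_coe_congr hPeq (hP σ₁) (hP σ₂)] at h
      have h1 := (((A ∪ B).image σ₁).orderIsoOfFin (hP σ₁)).injective (Subtype.coe_injective h)
      have h2 := Fin.castAdd_injective _ _ h1
      rw [← oio_symm_congr htAeq (hta σ₁) (hta σ₂) (σ₂ x)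
        (htAeq ▸ mem_image_of_mem σ₂ hx) (mem_image_of_mem σ₂ hx)] at h2
      have h3 := ((A.image σ₁).orderIsoOfFin (hta σ₁)).toEquiv.symm.injective h2
      exact congrArg Subtype.val h3
    · by_cases hx' : x ∈ B
      · have h := hf x
        rw [sortFun_of_memB σ₁ (hP σ₁) (hta σ₁) (htb σ₁) hd hx',
          sortFun_of_memB σ₂ (hP σ₂) (hta σ₂) (htb σ₂) hd hx',
          ← oio_coe_congr hPeq (hP σ₁) (hP σ₂)] at h
        have h1 := (((A ∪ B).image σ₁).orderIsoOfFin (hP σ₁)).injective (Subtype.coe_injective h)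
        have h2 : (((B.image σ₁).orderIsoOfFin (htb σ₁)).symm ⟨σ₁ x, mem_image_of_mem σ₁ hx'⟩)
            = (((B.image σ₂).orderIsoOfFin (htb σ₂)).symm ⟨σ₂ x, mem_image_of_mem σ₂ hx'⟩) := by
          have hv := congrArg Fin.val h1
          simp [Fin.natAdd] at hv
          exact Fin.ext (by omega)
        rw [← oio_symm_congr htBeq (htb σ₁) (htb σ₂) (σ₂ x)
          (htBeq ▸ mem_image_of_mem σ₂ hx') (mem_image_of_mem σ₂ hx')] at h2
        have h3 := ((B.image σ₁).orderIsoOfFin (htb σ₁)).toEquiv.symm.injective h2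
        exact congrArg Subtype.val h3
      · have hxU : x ∉ A ∪ B := by simp [hx, hx']
        have h := hf x
        rwa [sortFun_of_not_mem σ₁ (hP σ₁) (hta σ₁) (htb σ₁) hxU,
          sortFun_of_not_mem σ₂ (hP σ₂) (hta σ₂) (htb σ₂) hxU] at h
  calc n.factorial = #(univ : Finset (Equiv.Perm (Fin n))) := by
        rw [card_univ, Fintype.card_perm, Fintype.card_fin]
    _ ≤ #(S ×ˢ T) := card_le_card_of_injOn F (fun σ _ => hmaps σ) hinj.injOn
    _ = #S * #T := card_product S T
    _ = #S * (a + b).choose a := by rw [hTdef, card_powersetCard, card_univ, Fintype.card_fin]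

end Count

theorem bollobas_sets (n m a b : ℕ) (A B : Fin m → Finset (Fin n))
    (hdisj : ∀ i, A i ∩ B i = ∅)
    (hA : ∀ i, (A i).card = a) (hB : ∀ i, (B i).card = b)
    (hcross : ∀ i j, i ≠ j → A i ∩ B j ≠ ∅) :
    m ≤ (a + b).choose a := by
  classical
  have hfac : 0 < n.factorial := Nat.factorial_pos n
  set S : Fin m → Finset (Equiv.Perm (Fin n)) := fun i =>
    univ.filter (fun σ => ∀ x ∈ A i, ∀ y ∈ B i, σ x < σ y) with hS
  have hdisjS : ∀ i j, i ≠ j → Disjoint (S i) (S j) := by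
    intro i j hij
    rw [disjoint_left]
    intro σ hσi hσj
    obtain ⟨x, hx⟩ := nonempty_iff_ne_empty.mpr (hcross i j hij)
    obtain ⟨y, hy⟩ := nonempty_iff_ne_empty.mpr (hcross j i hij.symm)
    rw [mem_inter] at hx hy
    have h1 := (mem_filter.mp hσi).2 x hx.1 y hy.2
    have h2 := (mem_filter.mp hσj).2 y hy.1 x hx.2
    exact absurd (h1.trans h2) (lt_irrefl _)
  have hsum : ∑ i, #(S i) ≤ n.factorial := by
    rw [← card_biUnion (fun i _ j _ h => hdisjS i j h)]
    calc #(univ.biUnion S) ≤ #(univ : Finset (Equiv.Perm (Fin n))) :=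
          card_le_card (subset_univ _)
      _ = n.factorial := by rw [card_univ, Fintype.card_perm, Fintype.card_fin]
  have hlow : ∀ i, n.factorial ≤ #(S i) * (a + b).choose a := fun i =>
    perm_count (hdisj i) (hA i) (hB i)
  have hkey : m * n.factorial ≤ (a + b).choose a * n.factorial := by
    calc m * n.factorial = ∑ _i : Fin m, n.factorial := by
          rw [Finset.sum_const, card_univ, Fintype.card_fin, smul_eq_mul]
      _ ≤ ∑ i, #(S i) * (a + b).choose a := Finset.sum_le_sum (fun i _ => hlow i)
      _ = (∑ i, #(S i)) * (a + b).choose a := by rw [sum_mul]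
      _ ≤ n.factorial * (a + b).choose a := Nat.mul_le_mul_right _ hsum
      _ = (a + b).choose a * n.factorial := mul_comm _ _
  exact Nat.le_of_mul_le_mul_right hkey hfac
end

section
/- Let (A_1,B_1),...,(A_m,B_m) be pairs of subsets of [n] with A_i ∩ B_i = ∅ for all i, |A_i| = a, |B_i| = b for all i, and A_i ∩ B_j ≠ ∅ whenever i < j. Then m ≤ C(a+b, a). -/
open Finset Polynomial Matrix

theorem skew_bollobas_sets (n m a b : ℕ) (A B : Fin m → Finset (Fin n))
    (hdisj : ∀ i, A i ∩ B i = ∅)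
    (hA : ∀ i, (A i).card = a) (hB : ∀ i, (B i).card = b)
    (hcross : ∀ i j : Fin m, i < j → A i ∩ B j ≠ ∅) :
    m ≤ (a + b).choose a := by
  classical
  set x : Fin n → ℚ := fun t => ((t : ℕ) : ℚ) with hx
  have hxinj : Function.Injective x := by
    intro s t h
    exact Fin.ext (Nat.cast_injective h)
  set M : Matrix (Fin m) (Fin m) ℚ :=
    fun i j => ∏ s ∈ A i, ∏ t ∈ B j, (x s - x t) with hM
  have hM_tri : ∀ i j, i < j → M i j = 0 := by
    intro i j hij
    obtain ⟨t, ht⟩ := Finset.nonempty_iff_ne_empty.2 (hcross i j hij)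
    rw [Finset.mem_inter] at ht
    exact Finset.prod_eq_zero ht.1 (Finset.prod_eq_zero ht.2 (by simp))
  have hM_diag : ∀ i, M i i ≠ 0 := by
    intro i
    refine Finset.prod_ne_zero_iff.2 fun s hs => Finset.prod_ne_zero_iff.2 fun t ht => ?_
    refine sub_ne_zero.2 fun h => ?_
    have hst : s = t := hxinj h
    subst hst
    have : s ∈ A i ∩ B i := Finset.mem_inter.2 ⟨hs, ht⟩
    rw [hdisj i] at this
    exact absurd this (Finset.notMem_empty s)
  have hdet : M.det ≠ 0 := by
    have htri : Mᵀ.BlockTriangular id := fun i j h => hM_tri j i h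
    rw [← Matrix.det_transpose, Matrix.det_of_upperTriangular htri]
    exact Finset.prod_ne_zero_iff.2 fun i _ => hM_diag i
  -- enumerate A i
  set α : (i : Fin m) → Fin a → Fin n :=
    fun i s => ((A i).orderIsoOfFin (hA i) s : Fin n) with hα
  set P : Fin m → Polynomial ℚ := fun j => ∏ t ∈ B j, (X - C (x t)) with hP
  have hPdeg : ∀ j, (P j).natDegree < b + 1 := by
    intro j
    have h1 : (P j).natDegree = b := by
      rw [hP]
      rw [Polynomial.natDegree_prod _ _ (fun t _ => X_sub_C_ne_zero (x t))]
      simp [hB j]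
    omega
  have hMeval : ∀ i j, M i j =
      ∏ s : Fin a, ∑ k : Fin (b + 1), (P j).coeff k * x (α i s) ^ (k : ℕ) := by
    intro i j
    have h1 : M i j = ∏ s : Fin a, ∏ t ∈ B j, (x (α i s) - x t) := by
      show (∏ s ∈ A i, ∏ t ∈ B j, (x s - x t)) = _
      rw [← Finset.prod_coe_sort]
      exact (Fintype.prod_equiv ((A i).orderIsoOfFin (hA i)).toEquiv _ _ (fun s => rfl)).symm
    rw [h1]
    refine Finset.prod_congr rfl fun s _ => ?_
    have h2 : ∏ t ∈ B j, (x (α i s) - x t) = (P j).eval (x (α i s)) := by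
      simp [hP, Polynomial.eval_prod]
    rw [h2, Polynomial.eval_eq_sum_range' (hPdeg j),
      ← Fin.sum_univ_eq_sum_range (fun k => (P j).coeff k * x (α i s) ^ k) (b + 1)]
  set key : (Fin a → Fin (b + 1)) → Sym (Fin (b + 1)) a :=
    fun e => ⟨Finset.univ.val.map e, by simp⟩ with hkey
  set U : Matrix (Fin m) (Sym (Fin (b + 1)) a) ℚ :=
    fun i μ => ∑ e : {e : Fin a → Fin (b + 1) // key e = μ},
      ∏ s, x (α i s) ^ ((e.1 s : ℕ)) with hU
  set W : Matrix (Fin m) (Sym (Fin (b + 1)) a) ℚ :=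
    fun j μ => (Multiset.map (fun k : Fin (b + 1) => (P j).coeff (k : ℕ)) μ.1).prod with hW
  have hconst : ∀ (j : Fin m) (μ : Sym (Fin (b + 1)) a)
      (e : {e : Fin a → Fin (b + 1) // key e = μ}),
      (∏ s, (P j).coeff (e.1 s)) = W j μ := by
    intro j μ e
    obtain ⟨e, rfl⟩ := e
    show _ = (Multiset.map (fun k : Fin (b + 1) => (P j).coeff (k : ℕ))
      (Multiset.map e Finset.univ.val)).prod
    rw [Multiset.map_map, Finset.prod_eq_multiset_prod]
    rfl
  have hfact : M = U * Wᵀ := by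
    ext i j
    rw [Matrix.mul_apply, hMeval i j,
      Finset.prod_univ_sum (fun _ => (Finset.univ : Finset (Fin (b + 1))))
        (fun s k => (P j).coeff k * x (α i s) ^ (k : ℕ)),
      Fintype.piFinset_univ,
      ← Fintype.sum_fiberwise key
        (fun e : Fin a → Fin (b + 1) => ∏ s, (P j).coeff (e s) * x (α i s) ^ (e s : ℕ))]
    refine Finset.sum_congr rfl fun μ _ => ?_
    have h3 : ∀ e : {e : Fin a → Fin (b + 1) // key e = μ},
        (∏ s, (P j).coeff (e.1 s) * x (α i s) ^ (e.1 s : ℕ))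
          = (∏ s, x (α i s) ^ (e.1 s : ℕ)) * W j μ := by
      intro e
      rw [Finset.prod_mul_distrib, hconst j μ e, mul_comm]
    calc (∑ e : {e : Fin a → Fin (b + 1) // key e = μ},
            ∏ s, (P j).coeff (e.1 s) * x (α i s) ^ (e.1 s : ℕ))
        = ∑ e : {e : Fin a → Fin (b + 1) // key e = μ},
            (∏ s, x (α i s) ^ (e.1 s : ℕ)) * W j μ := by
          exact Finset.sum_congr rfl fun e _ => h3 e
      _ = U i μ * W j μ := by rw [← Finset.sum_mul]
      _ = U i μ * Wᵀ μ j := rfl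
  have hrank : M.rank = m := by
    rw [Matrix.rank_of_isUnit M ((Matrix.isUnit_iff_isUnit_det M).2 (isUnit_iff_ne_zero.2 hdet))]
    exact Fintype.card_fin m
  have hle : m ≤ Fintype.card (Sym (Fin (b + 1)) a) := by
    calc m = M.rank := hrank.symm
      _ = (U * Wᵀ).rank := by rw [hfact]
      _ ≤ U.rank := Matrix.rank_mul_le_left U Wᵀ
      _ ≤ Fintype.card (Sym (Fin (b + 1)) a) := Matrix.rank_le_card_width U
  have hcard : Fintype.card (Sym (Fin (b + 1)) a) = (a + b).choose a := by
    rw [Sym.card_sym_eq_multichoose, Nat.multichoose_eq, Fintype.card_fin]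
    congr 1
    omega
  omega
end

section
/- Let X be the disjoint union of sets X_1,...,X_r with |X_k| = n_k. Suppose (A_1,B_1),...,(A_m,B_m) is a family of pairs of subsets of X with A_i ∩ B_i = ∅, A_i ∩ B_j ≠ ∅ for i < j, and for all i and k: |A_i ∩ X_k| = a_k and |B_i ∩ X_k| = b_k. Then m ≤ ∏_{k=1}^r C(a_k + b_k, a_k). -/
namespace SkewBollobasAux

open Equiv Finset Matrix

variable {F : Type*} [Field F] {a b : ℕ}

/-- Triangular pairing lemma: if `M i j = ∑ s, P i s * Q j s` has nonzero diagonal and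
vanishes above the diagonal, then `m ≤ card T`. -/
theorem tri_card_le {m : ℕ} {T : Type*} [Fintype T] (P Q : Fin m → T → F)
    (hd : ∀ i, ∑ s, P i s * Q i s ≠ 0)
    (hu : ∀ i j : Fin m, i < j → ∑ s, P i s * Q j s = 0) :
    m ≤ Fintype.card T := by
  have hli : LinearIndependent F P := by
    rw [Fintype.linearIndependent_iff]
    intro g hg
    classical
    by_contra hcon
    push_neg at hcon
    obtain ⟨i0, hi0⟩ := hcon
    set s : Finset (Fin m) := Finset.univ.filter (fun i => g i ≠ 0) with hs
    have hne : s.Nonempty := ⟨i0, by simp [hs, hi0]⟩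
    set j := s.max' hne with hj
    have hgj : g j ≠ 0 := (Finset.mem_filter.1 (s.max'_mem hne)).2
    have key : ∑ i, g i * (∑ t, P i t * Q j t) = 0 := by
      calc ∑ i, g i * (∑ t, P i t * Q j t)
          = ∑ i, ∑ t, g i * P i t * Q j t := by
            simp_rw [Finset.mul_sum, mul_assoc]
        _ = ∑ t, ∑ i, g i * P i t * Q j t := Finset.sum_comm
        _ = ∑ t : T, (∑ i, g i * P i t) * Q j t := by simp_rw [Finset.sum_mul]
        _ = 0 := by
            refine Finset.sum_eq_zero fun t _ => ?_
            have h1 : (∑ i, g i • P i) t = 0 := by rw [hg]; rfl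
            simp only [Finset.sum_apply, Pi.smul_apply, smul_eq_mul] at h1
            rw [h1, zero_mul]
    have key2 : ∑ i, g i * (∑ t, P i t * Q j t) = g j * (∑ t, P j t * Q j t) := by
      rw [Finset.sum_eq_single j]
      · intro i _ hij
        rcases lt_or_gt_of_ne hij with h | h
        · rw [hu i j h, mul_zero]
        · have hgi : g i = 0 := by
            by_contra hgi
            have hmem : i ∈ s := by simp [hs, hgi]
            exact absurd (s.le_max' i hmem) (not_le.mpr h)
          rw [hgi, zero_mul]
      · simp
    rw [key] at key2
    rcases mul_eq_zero.1 key2.symm with h | h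
    · exact hgj h
    · exact hd j h
  have := hli.fintype_card_le_finrank
  simpa [Module.finrank_pi] using this

lemma card_compl_eq (S : {S : Finset (Fin (a+b)) // S.card = a}) : S.1ᶜ.card = b := by
  rw [Finset.card_compl, S.2, Fintype.card_fin, Nat.add_sub_cancel_left]

def emb1 (S : {S : Finset (Fin (a+b)) // S.card = a}) : Fin a → Fin (a+b) :=
  S.1.orderEmbOfFin S.2

def emb2 (S : {S : Finset (Fin (a+b)) // S.card = a}) : Fin b → Fin (a+b) :=
  S.1ᶜ.orderEmbOfFin (card_compl_eq S)

lemma emb1_mem (S : {S : Finset (Fin (a+b)) // S.card = a}) (i : Fin a) :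
    emb1 S i ∈ S.1 := Finset.orderEmbOfFin_mem _ _ _

lemma emb2_mem (S : {S : Finset (Fin (a+b)) // S.card = a}) (j : Fin b) :
    emb2 S j ∉ S.1 := by
  rw [← Finset.mem_compl]
  exact Finset.orderEmbOfFin_mem S.1ᶜ (card_compl_eq S) j

noncomputable def tau (S : {S : Finset (Fin (a+b)) // S.card = a}) : (Fin a ⊕ Fin b) ≃ Fin (a+b) := by
  apply Equiv.ofBijective (Sum.elim (emb1 S) (emb2 S))
  rw [Fintype.bijective_iff_injective_and_card]
  refine ⟨?_, by simp⟩
  rintro (x|x) (y|y) h <;> simp only [Sum.elim_inl, Sum.elim_inr] at h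
  · exact congrArg Sum.inl ((S.1.orderEmbOfFin S.2).injective h)
  · exact absurd (h ▸ emb1_mem S x) (emb2_mem S y)
  · exact absurd (h.symm ▸ emb1_mem S y) (emb2_mem S x)
  · exact congrArg Sum.inr ((S.1ᶜ.orderEmbOfFin (card_compl_eq S)).injective h)

@[simp] lemma tau_inl (S : {S : Finset (Fin (a+b)) // S.card = a}) (i : Fin a) :
    tau S (Sum.inl i) = emb1 S i := rfl

@[simp] lemma tau_inr (S : {S : Finset (Fin (a+b)) // S.card = a}) (j : Fin b) :
    tau S (Sum.inr j) = emb2 S j := rfl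

noncomputable def piS (S : {S : Finset (Fin (a+b)) // S.card = a}) : Equiv.Perm (Fin (a+b)) :=
  finSumFinEquiv.symm.trans (tau S)


noncomputable def Phi :
    (Σ _S : {S : Finset (Fin (a+b)) // S.card = a}, Perm (Fin a) × Perm (Fin b)) →
      Perm (Fin (a+b)) :=
  fun x => finSumFinEquiv.symm.trans ((Equiv.sumCongr x.2.1 x.2.2).trans (tau x.1))

lemma Phi_apply (S : {S : Finset (Fin (a+b)) // S.card = a}) (s1 : Perm (Fin a))
    (s2 : Perm (Fin b)) (z : Fin a ⊕ Fin b) :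
    Phi ⟨S, s1, s2⟩ (finSumFinEquiv z) = tau S (Equiv.sumCongr s1 s2 z) := by
  simp [Phi]

lemma sign_Phi (S : {S : Finset (Fin (a+b)) // S.card = a}) (s1 : Perm (Fin a))
    (s2 : Perm (Fin b)) :
    Equiv.Perm.sign (Phi ⟨S, s1, s2⟩) =
      Equiv.Perm.sign s1 * Equiv.Perm.sign s2 * Equiv.Perm.sign (piS S) := by
  have hdec : Phi (a := a) (b := b) ⟨S, s1, s2⟩ =
      ((finSumFinEquiv.symm.trans (Equiv.sumCongr s1 s2)).trans finSumFinEquiv).trans (piS S) := by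
    ext x
    simp [Phi, piS, Equiv.trans_apply]
  rw [hdec]
  have h1 : Equiv.Perm.sign
      (((finSumFinEquiv.symm.trans (Equiv.sumCongr s1 s2)).trans finSumFinEquiv) : Perm (Fin (a+b)))
      = Equiv.Perm.sign (Equiv.sumCongr s1 s2) :=
    Equiv.Perm.sign_symm_trans_trans _ _
  calc Equiv.Perm.sign ((((finSumFinEquiv.symm.trans (Equiv.sumCongr s1 s2)).trans
          finSumFinEquiv)).trans (piS S))
      = Equiv.Perm.sign ((piS S) * (((finSumFinEquiv.symm.trans (Equiv.sumCongr s1 s2)).trans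
          finSumFinEquiv))) := rfl
    _ = Equiv.Perm.sign (piS S) * Equiv.Perm.sign (Equiv.sumCongr s1 s2) := by
        rw [_root_.map_mul, h1]
    _ = _ := by rw [Equiv.Perm.sign_sumCongr]; exact mul_comm _ _

lemma Phi_bijective : Function.Bijective (Phi (a := a) (b := b)) := by
  rw [Fintype.bijective_iff_injective_and_card]
  constructor
  · rintro ⟨S, s1, s2⟩ ⟨S', s1', s2'⟩ h
    have hval : ∀ z : Fin a ⊕ Fin b,
        tau S (Equiv.sumCongr s1 s2 z) = tau S' (Equiv.sumCongr s1' s2' z) := by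
      intro z
      have := congrArg (fun (e : Perm (Fin (a+b))) => e (finSumFinEquiv z)) h
      simpa [Phi_apply] using this
    have hSsub : S.1 ⊆ S'.1 := by
      intro u hu
      have : (u : Fin (a+b)) ∈ Set.range (S.1.orderEmbOfFin S.2) := by
        rw [Finset.range_orderEmbOfFin]
        exact hu
      obtain ⟨i, hi⟩ := this
      have h2 := hval (Sum.inl (s1.symm i))
      simp only [Equiv.sumCongr_apply, Sum.map_inl, tau_inl, Equiv.apply_symm_apply] at h2
      have : u = emb1 S' (s1' (s1.symm i)) := by
        rw [← h2]; exact hi.symm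
      rw [this]
      exact emb1_mem S' _
    have hS : S = S' := Subtype.ext (Finset.eq_of_subset_of_card_le hSsub (by rw [S.2, S'.2]))
    subst hS
    have h1 : s1 = s1' := by
      ext i
      have h2 := hval (Sum.inl i)
      simp only [Equiv.sumCongr_apply, Sum.map_inl, tau_inl] at h2
      exact congrArg Fin.val ((S.1.orderEmbOfFin S.2).injective h2)
    have h2 : s2 = s2' := by
      ext j
      have h3 := hval (Sum.inr j)
      simp only [Equiv.sumCongr_apply, Sum.map_inr, tau_inr] at h3
      exact congrArg Fin.val ((S.1ᶜ.orderEmbOfFin (card_compl_eq S)).injective h3)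
    subst h1; subst h2; rfl
  · simp only [Fintype.card_sigma, Fintype.card_prod, Fintype.card_perm, Fintype.card_fin,
      Finset.sum_const, smul_eq_mul, Finset.card_univ, Fintype.card_finset_len]
    have := Nat.choose_mul_factorial_mul_factorial (Nat.le_add_right a b)
    rw [Nat.add_sub_cancel_left] at this
    rw [← this]
    ring

noncomputable def pfun (x : Fin a → F) (S : {S : Finset (Fin (a+b)) // S.card = a}) : F :=
  ((Equiv.Perm.sign (piS S) : ℤ) : F) *
    ∑ s1 : Perm (Fin a), ((Equiv.Perm.sign s1 : ℤ) : F) * ∏ i, x i ^ ((emb1 S (s1 i) : ℕ))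

noncomputable def qfun (y : Fin b → F) (S : {S : Finset (Fin (a+b)) // S.card = a}) : F :=
  ∑ s2 : Perm (Fin b), ((Equiv.Perm.sign s2 : ℤ) : F) * ∏ j, y j ^ ((emb2 S (s2 j) : ℕ))

theorem vandermonde_decomp (x : Fin a → F) (y : Fin b → F) :
    (Matrix.vandermonde (fun rr => Sum.elim x y (finSumFinEquiv.symm rr))).det =
      ∑ S : {S : Finset (Fin (a+b)) // S.card = a}, pfun x S * qfun y S := by
  classical
  set w : Fin (a+b) → F := fun rr => Sum.elim x y (finSumFinEquiv.symm rr) with hw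
  have hdet : (Matrix.vandermonde w).det =
      ∑ σ : Perm (Fin (a+b)), ((Equiv.Perm.sign σ : ℤ) : F) * ∏ i, w i ^ ((σ i : ℕ)) := by
    rw [← Matrix.det_transpose, Matrix.det_apply']
    simp only [Matrix.transpose_apply, Matrix.vandermonde_apply]
  rw [hdet]
  rw [← Fintype.sum_bijective Phi Phi_bijective
      (fun p => ((Equiv.Perm.sign (Phi p) : ℤ) : F) * ∏ i, w i ^ ((Phi p i : ℕ))) _
      (fun p => rfl)]
  rw [← Finset.univ_sigma_univ, Finset.sum_sigma]
  refine Finset.sum_congr rfl fun S _ => ?_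
  rw [Fintype.sum_prod_type]
  have rhs_eq : pfun x S * qfun y S = ∑ s1 : Perm (Fin a), ∑ s2 : Perm (Fin b),
      ((Equiv.Perm.sign (piS S) : ℤ) : F) * (((Equiv.Perm.sign s1 : ℤ) : F) *
        ∏ i, x i ^ ((emb1 S (s1 i) : ℕ))) * (((Equiv.Perm.sign s2 : ℤ) : F) *
        ∏ j, y j ^ ((emb2 S (s2 j) : ℕ))) := by
    unfold pfun qfun
    rw [Finset.mul_sum]
    refine (Finset.sum_congr rfl fun s2 _ => ?_).trans Finset.sum_comm
    rw [Finset.mul_sum, Finset.sum_mul]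
  rw [rhs_eq]
  refine Finset.sum_congr rfl fun s1 _ => ?_
  refine Finset.sum_congr rfl fun s2 _ => ?_
  have hprod : ∏ i, w i ^ ((Phi ⟨S, s1, s2⟩ i : ℕ)) =
      (∏ i, x i ^ ((emb1 S (s1 i) : ℕ))) * ∏ j, y j ^ ((emb2 S (s2 j) : ℕ)) := by
    rw [← Equiv.prod_comp finSumFinEquiv (fun i => w i ^ ((Phi ⟨S, s1, s2⟩ i : ℕ)))]
    rw [Fintype.prod_sum_type]
    congr 1
    · refine Finset.prod_congr rfl fun i _ => ?_
      have h1 : w (finSumFinEquiv (Sum.inl i)) = x i := by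
        simp [hw]
      have h2 : Phi (⟨S, s1, s2⟩ :
          Σ _S : {S : Finset (Fin (a+b)) // S.card = a}, Perm (Fin a) × Perm (Fin b))
          (finSumFinEquiv (Sum.inl i)) = emb1 S (s1 i) := by
        rw [Phi_apply]; rfl
      rw [h1, h2]
    · refine Finset.prod_congr rfl fun j _ => ?_
      have h1 : w (finSumFinEquiv (Sum.inr j)) = y j := by
        simp [hw]
      have h2 : Phi (⟨S, s1, s2⟩ :
          Σ _S : {S : Finset (Fin (a+b)) // S.card = a}, Perm (Fin a) × Perm (Fin b))
          (finSumFinEquiv (Sum.inr j)) = emb2 S (s2 j) := by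
        rw [Phi_apply]; rfl
      rw [h1, h2]
  rw [hprod, sign_Phi]
  push_cast [Units.val_mul]
  ring

set_option maxHeartbeats 1200000 in
theorem aux {r m : ℕ} (a b : Fin r → ℕ)
    (xv : Fin m → ∀ k : Fin r, Fin (a k) → ℚ)
    (yv : Fin m → ∀ k : Fin r, Fin (b k) → ℚ)
    (hdiag : ∀ i k, Function.Injective (Sum.elim (xv i k) (yv i k)))
    (hcr : ∀ i j : Fin m, i < j → ∃ (k : Fin r) (i' : Fin (a k)) (j' : Fin (b k)),
      xv i k i' = yv j k j') :
    m ≤ ∏ k, (a k + b k).choose (a k) := by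
  have hsum : ∀ i j : Fin m,
      ∑ S : (∀ k : Fin r, {S : Finset (Fin (a k + b k)) // S.card = a k}),
        (∏ k, pfun (xv i k) (S k)) * ∏ k, qfun (yv j k) (S k)
      = ∏ k, (Matrix.vandermonde
          (fun rr => Sum.elim (xv i k) (yv j k) (finSumFinEquiv.symm rr))).det := by
    intro i j
    calc ∑ S : (∀ k : Fin r, {S : Finset (Fin (a k + b k)) // S.card = a k}),
          (∏ k, pfun (xv i k) (S k)) * ∏ k, qfun (yv j k) (S k)
        = ∑ S : (∀ k : Fin r, {S : Finset (Fin (a k + b k)) // S.card = a k}),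
          ∏ k, (pfun (xv i k) (S k) * qfun (yv j k) (S k)) :=
          Finset.sum_congr rfl fun S _ => (Finset.prod_mul_distrib).symm
      _ = ∏ k, ∑ Sk : {S : Finset (Fin (a k + b k)) // S.card = a k},
            (pfun (xv i k) Sk * qfun (yv j k) Sk) := by
          rw [Finset.prod_univ_sum]
          rw [Fintype.piFinset_univ]
      _ = _ := Finset.prod_congr rfl fun k _ => (vandermonde_decomp _ _).symm
  have hd : ∀ i : Fin m,
      ∑ S : (∀ k : Fin r, {S : Finset (Fin (a k + b k)) // S.card = a k}),
        (∏ k, pfun (xv i k) (S k)) * ∏ k, qfun (yv i k) (S k) ≠ 0 := by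
    intro i
    rw [hsum i i]
    refine Finset.prod_ne_zero_iff.2 fun k _ => ?_
    rw [Matrix.det_vandermonde_ne_zero_iff]
    exact (hdiag i k).comp finSumFinEquiv.symm.injective
  have hu : ∀ i j : Fin m, i < j →
      ∑ S : (∀ k : Fin r, {S : Finset (Fin (a k + b k)) // S.card = a k}),
        (∏ k, pfun (xv i k) (S k)) * ∏ k, qfun (yv j k) (S k) = 0 := by
    intro i j hij
    rw [hsum i j]
    obtain ⟨k, i', j', hk⟩ := hcr i j hij
    refine Finset.prod_eq_zero (Finset.mem_univ k) ?_
    refine Matrix.det_zero_of_row_eq (i := finSumFinEquiv (Sum.inl i'))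
      (j := finSumFinEquiv (Sum.inr j')) ?_ ?_
    · intro h
      have := finSumFinEquiv.injective h
      simp at this
    · funext c
      simp only [Matrix.vandermonde, Matrix.of_apply, Equiv.symm_apply_apply, Sum.elim_inl, Sum.elim_inr]
      rw [hk]
  have hcard : m ≤ Fintype.card (∀ k : Fin r, {S : Finset (Fin (a k + b k)) // S.card = a k}) :=
    tri_card_le _ _ hd hu
  refine hcard.trans (le_of_eq ?_)
  rw [Fintype.card_pi]
  refine Finset.prod_congr rfl fun k _ => ?_
  rw [Fintype.card_finset_len, Fintype.card_fin]

end SkewBollobasAux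

theorem skew_bollobas_partitioned {X : Type*} [Fintype X] [DecidableEq X]
    (r m : ℕ) (Xpart : Fin r → Finset X) (nk a b : Fin r → ℕ)
    (hpart : ∀ x : X, ∃! k, x ∈ Xpart k)
    (hnk : ∀ k, (Xpart k).card = nk k)
    (A B : Fin m → Finset X)
    (hdisj : ∀ i, A i ∩ B i = ∅)
    (hcross : ∀ i j : Fin m, i < j → A i ∩ B j ≠ ∅)
    (hA : ∀ i k, (A i ∩ Xpart k).card = a k)
    (hB : ∀ i k, (B i ∩ Xpart k).card = b k) :
    m ≤ ∏ k, (a k + b k).choose (a k) := by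
  classical
  obtain ⟨t, ht⟩ : ∃ t : X → ℚ, Function.Injective t :=
    ⟨fun x => ((Fintype.equivFin X x : ℕ) : ℚ), fun x y h => by
      have h2 : (((Fintype.equivFin X) x : ℕ) : ℚ) = (((Fintype.equivFin X) y : ℕ) : ℚ) := h
      have h3 : ((Fintype.equivFin X) x : ℕ) = ((Fintype.equivFin X) y : ℕ) := by
        exact_mod_cast h2
      exact (Fintype.equivFin X).injective (Fin.val_injective h3)⟩
  have hAcard : ∀ i k, ((A i ∩ Xpart k).image t).card = a k := fun i k => by
    rw [Finset.card_image_of_injective _ ht, hA]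
  have hBcard : ∀ i k, ((B i ∩ Xpart k).image t).card = b k := fun i k => by
    rw [Finset.card_image_of_injective _ ht, hB]
  refine SkewBollobasAux.aux a b
    (fun i k => ((A i ∩ Xpart k).image t).orderEmbOfFin (hAcard i k))
    (fun i k => ((B i ∩ Xpart k).image t).orderEmbOfFin (hBcard i k)) ?_ ?_
  · intro i k
    have key : ∀ (z1 : Fin (a k)) (z2 : Fin (b k)),
        ((A i ∩ Xpart k).image t).orderEmbOfFin (hAcard i k) z1 ≠
        ((B i ∩ Xpart k).image t).orderEmbOfFin (hBcard i k) z2 := by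
      intro z1 z2 h
      have h1 := Finset.orderEmbOfFin_mem ((A i ∩ Xpart k).image t) (hAcard i k) z1
      have h2 := Finset.orderEmbOfFin_mem ((B i ∩ Xpart k).image t) (hBcard i k) z2
      rw [h] at h1
      obtain ⟨u, hu, hu2⟩ := Finset.mem_image.1 h1
      obtain ⟨v, hv, hv2⟩ := Finset.mem_image.1 h2
      have huv : v = u := ht (hv2.trans hu2.symm)
      subst huv
      have hmem : v ∈ A i ∩ B i :=
        Finset.mem_inter.2 ⟨(Finset.mem_inter.1 hu).1, (Finset.mem_inter.1 hv).1⟩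
      rw [hdisj i] at hmem
      exact absurd hmem (Finset.notMem_empty v)
    rintro (z1|z1) (z2|z2) h <;> simp only [Sum.elim_inl, Sum.elim_inr] at h
    · exact congrArg Sum.inl ((((A i ∩ Xpart k).image t).orderEmbOfFin (hAcard i k)).injective h)
    · exact absurd h (key z1 z2)
    · exact absurd h.symm (key z2 z1)
    · exact congrArg Sum.inr ((((B i ∩ Xpart k).image t).orderEmbOfFin (hBcard i k)).injective h)
  · intro i j hij
    have hne : (A i ∩ B j).Nonempty := Finset.nonempty_iff_ne_empty.2 (hcross i j hij)
    obtain ⟨x, hx⟩ := hne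
    obtain ⟨k, hk, _⟩ := hpart x
    have hxA : x ∈ A i := (Finset.mem_inter.1 hx).1
    have hxB : x ∈ B j := (Finset.mem_inter.1 hx).2
    have h1 : t x ∈ (A i ∩ Xpart k).image t :=
      Finset.mem_image_of_mem t (Finset.mem_inter.2 ⟨hxA, hk⟩)
    have h2 : t x ∈ (B j ∩ Xpart k).image t :=
      Finset.mem_image_of_mem t (Finset.mem_inter.2 ⟨hxB, hk⟩)
    have r1 : t x ∈ Set.range (((A i ∩ Xpart k).image t).orderEmbOfFin (hAcard i k)) := by
      rw [Finset.range_orderEmbOfFin]; exact h1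
    have r2 : t x ∈ Set.range (((B j ∩ Xpart k).image t).orderEmbOfFin (hBcard j k)) := by
      rw [Finset.range_orderEmbOfFin]; exact h2
    obtain ⟨i', hi'⟩ := r1
    obtain ⟨j', hj'⟩ := r2
    exact ⟨k, i', j', hi'.trans hj'.symm⟩
end

section
/- Let (A_1,B_1),...,(A_m,B_m) be pairs of subspaces of ℝ^n with dim(A_i ∩ B_i) = 0 for all i, dim(A_i) = a, dim(B_i) = b for all i, and dim(A_i ∩ B_j) > 0 whenever i < j. Then m ≤ C(a+b, a). -/
/-!
Lovász's exterior-algebra argument. Quotienting `ℝⁿ` by a generic subspace of codimension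
`a + b` keeps every `Aᵢ ⊕ Bᵢ` intact and every `Aᵢ ∩ Bⱼ` nonzero, so one may assume `n = a + b`.
Choose bases `uᵢ` of `Aᵢ` and `vⱼ` of `Bⱼ`. Then `det (uᵢ, vⱼ)` vanishes for `i < j` but not for
`i = j`, so the functionals `w ↦ det (uᵢ, w)` on `⋀ᵇ ℝ^(a+b)` make the vectors `⋀ vⱼ`
triangular, hence linearly independent in a space of dimension `(a + b).choose b`.
-/

open Module

theorem linearIndependent_of_triangular {R M ι : Type*} [CommRing R] [IsDomain R]
    [AddCommGroup M] [Module R M] [Fintype ι] [LinearOrder ι] (v : ι → M) (φ : ι → Dual R M)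
    (hdiag : ∀ i, φ i (v i) ≠ 0) (htri : ∀ i j, j < i → φ j (v i) = 0) :
    LinearIndependent R v := by
  classical
  let A : Matrix ι ι R := .of fun i j => φ j (v i)
  have hA : A.det ≠ 0 := by
    rw [Matrix.det_of_isUpperTriangular (M := A) fun i j hji => htri i j hji]
    exact Finset.prod_ne_zero_iff.2 fun i _ => hdiag i
  exact .of_comp (LinearMap.pi φ) (Matrix.linearIndependent_rows_of_det_ne_zero hA)

namespace AlternatingMap

variable {R M N ι κ : Type*} [CommSemiring R] [AddCommMonoid M] [Module R M]
  [AddCommMonoid N] [Module R N]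

def currySum (f : M [⋀^ι ⊕ κ]→ₗ[R] N) (u : ι → M) : M [⋀^κ]→ₗ[R] N where
  toMultilinearMap := f.toMultilinearMap.currySum u
  map_eq_zero_of_eq' w k l h hkl :=
    f.map_eq_zero_of_eq (Sum.elim u w) (i := .inr k) (j := .inr l) h (by simpa)

@[simp]
theorem currySum_apply (f : M [⋀^ι ⊕ κ]→ₗ[R] N) (u : ι → M) (w : κ → M) :
    f.currySum u w = f (Sum.elim u w) := rfl

end AlternatingMap

theorem card_le_choose_of_linearIndependent_sumElim {K V ι : Type*} [Field K] [AddCommGroup V]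
    [Module K V] [FiniteDimensional K V] [Fintype ι] [LinearOrder ι] {a b : ℕ}
    (hV : finrank K V = a + b) (u : ι → Fin a → V) (v : ι → Fin b → V)
    (hdiag : ∀ i, LinearIndependent K (Sum.elim (u i) (v i)))
    (htri : ∀ i j, i < j → ¬LinearIndependent K (Sum.elim (u i) (v j))) :
    Fintype.card ι ≤ (a + b).choose b := by
  let e : Basis (Fin a ⊕ Fin b) K V :=
    (finBasis K V).reindex (Fintype.equivFinOfCardEq (by simp [hV])).symm
  let φ i : Dual K (⋀[K]^b V) := exteriorPower.alternatingMapLinearEquiv (e.det.currySum (u i))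
  have hφ i j : φ i (exteriorPower.ιMulti K b (v j)) = e.det (Sum.elim (u i) (v j)) := by
    simp [φ, exteriorPower.alternatingMapLinearEquiv_apply_ιMulti]
  have hli : LinearIndependent K fun j => exteriorPower.ιMulti K b (v j) := by
    refine linearIndependent_of_triangular _ φ (fun i => ?_) fun i j hji => ?_
    · rw [hφ]
      exact (e.is_basis_iff_det.1 ⟨hdiag i, (hdiag i).span_eq_top_of_card_eq_finrank'
        (by simp [hV])⟩).ne_zero
    · rw [hφ]
      exact e.det.map_linearDependent _ (htri j i hji)
  calc Fintype.card ι ≤ finrank K (⋀[K]^b V) := hli.fintype_card_le_finrank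
    _ = (a + b).choose b := by rw [exteriorPower.finrank_eq, hV]

section DivisionRing

variable {K V : Type*} [DivisionRing K] [AddCommGroup V] [Module K V]

theorem Submodule.exists_linearIndependent_span_eq (A : Submodule K V) [Module.Finite K A]
    {a : ℕ} (hA : finrank K A = a) :
    ∃ u : Fin a → V, LinearIndependent K u ∧ span K (Set.range u) = A := by
  let e := finBasisOfFinrankEq K A hA
  refine ⟨A.subtype ∘ e, e.linearIndependent.map' _ A.ker_subtype, ?_⟩
  rw [Set.range_comp, ← map_span, e.span_eq, map_top, range_subtype]

variable [Infinite K]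

theorem exists_forall_notMem_of_finrank_lt {ι : Type*} [Finite ι] (P : ι → Submodule K V)
    (hP : ∀ i, finrank K (P i) < finrank K V) : ∃ x, ∀ i, x ∉ P i := by
  by_contra! hcover
  obtain ⟨i, hi⟩ := Subspace.exists_eq_top_of_iUnion_eq_univ (p := P)
    (Set.eq_univ_of_forall fun x => Set.mem_iUnion.2 (hcover x))
  exact (hP i).ne (by rw [hi, finrank_top])

theorem exists_finrank_eq_forall_disjoint [FiniteDimensional K V] {ι : Type*} [Finite ι]
    (D : ι → Submodule K V) {N : ℕ} (hD : ∀ i, finrank K (D i) ≤ N) {k : ℕ}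
    (hk : k + N ≤ finrank K V) :
    ∃ C : Submodule K V, finrank K C = k ∧ ∀ i, Disjoint C (D i) := by
  induction k with
  | zero => exact ⟨⊥, finrank_bot K V, fun _ => disjoint_bot_left⟩
  | succ k ih =>
    obtain ⟨C, hC, hCD⟩ := ih (by omega)
    have hlt : ∀ o : Option ι, finrank K ↥(C ⊔ o.elim ⊥ D) < finrank K V := by
      refine fun o => (Submodule.finrank_add_le_finrank_add_finrank _ _).trans_lt ?_
      rcases o with _ | i
      · rw [Option.elim_none, finrank_bot, hC]; omega
      · rw [Option.elim_some, hC]; have := hD i; omega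
    obtain ⟨x, hx⟩ := exists_forall_notMem_of_finrank_lt _ hlt
    have hxC : x ∉ C := by simpa using hx none
    refine ⟨C ⊔ K ∙ x, by rw [Submodule.finrank_sup_span_singleton hxC, hC], fun i => ?_⟩
    rw [sup_comm]
    refine Disjoint.disjoint_sup_left_of_disjoint_sup_right (hCD i) ?_
    exact (Submodule.disjoint_span_singleton.2 fun h => absurd h (hx (some i))).symm

end DivisionRing

theorem card_le_choose_of_skew_subspaces {K V ι : Type*} [Field K] [Infinite K] [AddCommGroup V]
    [Module K V] [FiniteDimensional K V] [Fintype ι] [LinearOrder ι] {a b : ℕ}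
    (A B : ι → Submodule K V) (hA : ∀ i, finrank K (A i) = a) (hB : ∀ i, finrank K (B i) = b)
    (hdisj : ∀ i, Disjoint (A i) (B i)) (hcross : ∀ i j, i < j → ¬Disjoint (A i) (B j)) :
    Fintype.card ι ≤ (a + b).choose b := by
  rcases isEmpty_or_nonempty ι with hι | ⟨⟨i₀⟩⟩
  · simp
  have hsup i : finrank K ↥(A i ⊔ B i) = a + b := by
    rw [← hA, ← hB, ← Submodule.finrank_sup_add_finrank_inf_eq, (hdisj i).eq_bot, finrank_bot,
      add_zero]
  have hab : a + b ≤ finrank K V := hsup i₀ ▸ (A i₀ ⊔ B i₀).finrank_le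
  obtain ⟨C, hC, hCD⟩ := exists_finrank_eq_forall_disjoint (fun i => A i ⊔ B i)
    (fun i => (hsup i).le) (k := finrank K V - (a + b)) (by omega)
  have hQ : finrank K (V ⧸ C) = a + b := by
    have := C.finrank_quotient_add_finrank
    omega
  choose u hu hAu using fun i => (A i).exists_linearIndependent_span_eq (hA i)
  choose v hv hBv using fun i => (B i).exists_linearIndependent_span_eq (hB i)
  refine card_le_choose_of_linearIndependent_sumElim hQ (fun i => C.mkQ ∘ u i)
    (fun i => C.mkQ ∘ v i) (fun i => ?_) fun i j hij hli => hcross i j hij ?_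
  · rw [← Sum.comp_elim]
    refine ((hu i).sum_type (hv i) (by rw [hAu, hBv]; exact hdisj i)).map ?_
    rw [Set.Sum.elim_range, Submodule.span_union, hAu, hBv, Submodule.ker_mkQ]
    exact (hCD i).symm
  · rw [← Sum.comp_elim] at hli
    simpa [hAu, hBv] using (linearIndependent_sum.1 hli.of_comp).2.2

theorem skew_bollobas_subspaces (n m a b : ℕ)
    (A B : Fin m → Submodule ℝ (Fin n → ℝ))
    (hdisj : ∀ i, Module.finrank ℝ ↥(A i ⊓ B i) = 0)
    (hA : ∀ i, Module.finrank ℝ ↥(A i) = a)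
    (hB : ∀ i, Module.finrank ℝ ↥(B i) = b)
    (hcross : ∀ i j : Fin m, i < j → 0 < Module.finrank ℝ ↥(A i ⊓ B j)) :
    m ≤ (a + b).choose a := by
  have h := card_le_choose_of_skew_subspaces A B hA hB
    (fun i => disjoint_iff.2 (Submodule.finrank_eq_zero.1 (hdisj i)))
    (fun i j hij hd => (hcross i j hij).ne' (by rw [disjoint_iff.1 hd, finrank_bot]))
  rwa [Fintype.card_fin, ← Nat.choose_symm_add] at h
end

section
/- Let V = ℝ^{n+l} with W an l-dimensional subspace, where n + l = a + b. Suppose (A_1,B_1),...,(A_m,B_m) is a skew Bollobás system of subspaces where each A_i is of type (a, a_0) and each B_i is of type (b, b_0) with respect to W, and l ≤ min(a_0 + b, a + b_0). Then m ≤ ∑_{k=0}^{l-a_0-b_0} C(l, a_0+k) · C(a+b-l, a-a_0-k). -/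
/-!
Let `ωᵢ ∈ ⋀ᵃ V` be the wedge of a basis of `Aᵢ` and `fⱼ` the alternating `a`-form
`x ↦ det (x mod Bⱼ)` on `V`. Then `fⱼ(ωᵢ) ≠ 0` exactly when `Aᵢ ∩ Bⱼ = 0`, so the matrix
`fⱼ(ωᵢ)` is lower triangular with nonzero diagonal and has rank `m`.

Choose a basis `v` of `V` in which the vectors indexed by `J` span `W`, and expand `fⱼ(ωᵢ)` in
the induced basis `v_S` of `⋀ᵃ V` (Cauchy–Binet). The `S`-coordinate of `ωᵢ` vanishes when
`|S ∩ J| < a₀`, because `Aᵢ` has `a₀` independent vectors in `W`; and `fⱼ(v_S)` vanishes when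
`|S ∩ J| > l - b₀`, the dimension of the image of `W` in `V / Bⱼ`. So the matrix factors
through the `a`-sets `S` with `a₀ ≤ |S ∩ J| ≤ l - b₀`, and `m` is at most their number.
-/

open Module Set.powersetCard

theorem AlternatingMap.map_eq_zero_of_finrank_lt_card {K M N ι : Type*} [Field K]
    [AddCommGroup M] [Module K M] [AddCommGroup N] [Module K N]
    (f : M [⋀^ι]→ₗ[K] N) {v : ι → M} {p : Submodule K M} [FiniteDimensional K p]
    {s : Finset ι} (hv : ∀ i ∈ s, v i ∈ p) (h : finrank K p < s.card) : f v = 0 := by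
  refine f.map_linearDependent v fun hli => h.not_ge ?_
  have : LinearIndependent K (fun i : s => (⟨v i, hv i i.2⟩ : p)) :=
    .of_comp p.subtype (hli.comp _ Subtype.val_injective)
  simpa using this.fintype_card_le_finrank

theorem Matrix.det_eq_zero_of_card_lt {ι K : Type*} [Fintype ι] [DecidableEq ι] [Field K]
    (M : Matrix ι ι K) {R C : Finset ι} (hM : ∀ i ∈ R, ∀ j ∉ C, M i j = 0)
    (h : C.card < R.card) : M.det = 0 := by
  classical
  have hrow : ∀ i ∈ R, (fun j => M i j) ∈ Submodule.span K (Pi.basisFun K ι '' C) := by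
    intro i hi
    rw [Basis.mem_span_image]
    intro j hj
    by_contra hjC
    exact (Finsupp.mem_support_iff.mp hj) (by simpa using hM i hi j hjC)
  have hp : finrank K (Submodule.span K (Pi.basisFun K ι '' C)) < R.card := by
    rw [← Finset.coe_image]
    exact (finrank_span_finset_le_card _).trans_lt (Finset.card_image_le.trans_lt h)
  exact Matrix.detRowAlternating.map_eq_zero_of_finrank_lt_card (v := fun i j => M i j) hrow hp

theorem Matrix.card_le_card_of_isLowerTriangular_mul {κ ι K : Type*} [Fintype κ] [LinearOrder κ]
    [Fintype ι] [Field K] (X : Matrix κ ι K) (Y : Matrix ι κ K)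
    (htri : (X * Y).IsLowerTriangular) (hdiag : ∀ i, (X * Y) i i ≠ 0) :
    Fintype.card κ ≤ Fintype.card ι := by
  classical
  have hunit : IsUnit (X * Y) := by
    rw [Matrix.isUnit_iff_isUnit_det, Matrix.det_of_isLowerTriangular _ htri, isUnit_iff_ne_zero]
    exact Finset.prod_ne_zero_iff.mpr fun i _ => hdiag i
  calc Fintype.card κ = (X * Y).rank := (Matrix.rank_of_isUnit _ hunit).symm
    _ ≤ X.rank := Matrix.rank_mul_le_left X Y
    _ ≤ Fintype.card ι := Matrix.rank_le_card_width X

theorem Submodule.finrank_map_mkQ_add_finrank_inf {K V : Type*} [Field K] [AddCommGroup V]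
    [Module K V] (B W : Submodule K V) [FiniteDimensional K W] :
    finrank K (W.map B.mkQ) + finrank K ↥(B ⊓ W) = finrank K W := by
  have := LinearMap.finrank_range_add_finrank_ker (B.mkQ ∘ₗ W.subtype)
  rwa [LinearMap.range_comp, Submodule.range_subtype, LinearMap.ker_comp, Submodule.ker_mkQ,
    ← Submodule.finrank_map_subtype_eq, Submodule.map_comap_subtype, inf_comm] at this

theorem Module.Basis.det_mkQ_ne_zero_iff_disjoint {K V ι : Type*} [Field K] [AddCommGroup V]
    [Module K V] [FiniteDimensional K V] [Fintype ι] [DecidableEq ι] {A B : Submodule K V}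
    (bq : Basis ι K (V ⧸ B)) (u : Basis ι K A) :
    bq.det (fun k => B.mkQ (u k)) ≠ 0 ↔ Disjoint A B := by
  constructor
  · intro hdet
    rw [Submodule.disjoint_def]
    intro x hxA hxB
    have hli : LinearIndependent K (fun k => B.mkQ (u k)) := by
      by_contra hdep
      exact hdet (bq.det.map_linearDependent _ hdep)
    have hrepr : u.repr ⟨x, hxA⟩ = 0 := by
      ext k
      refine Fintype.linearIndependent_iff.mp hli _ ?_ k
      have hx : ∑ k, u.repr ⟨x, hxA⟩ k • (u k : V) = x := by
        simpa only [Submodule.coe_sum, Submodule.coe_smul] using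
          congrArg Subtype.val (u.sum_repr ⟨x, hxA⟩)
      simp only [← map_smul, ← map_sum, hx]
      exact (Submodule.Quotient.mk_eq_zero B).mpr hxB
    simpa using congrArg Subtype.val (u.repr.map_eq_zero_iff.mp hrepr)
  · intro hdisj
    have hcompl : IsCompl B A := by
      refine (Submodule.isCompl_iff_disjoint B A ?_).mpr hdisj.symm
      have := Submodule.finrank_quotient_add_finrank B
      rw [finrank_eq_card_basis bq, ← finrank_eq_card_basis u] at this
      omega
    have hbasis :
        (fun k => B.mkQ (u k)) = u.map (Submodule.quotientEquivOfIsCompl B A hcompl).symm :=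
      funext fun k => by simp
    rw [hbasis]
    exact (bq.isUnit_det _).ne_zero

theorem Submodule.exists_basis_span_image_eq {K V : Type*} [Field K] [AddCommGroup V]
    [Module K V] [FiniteDimensional K V] {N : ℕ} (hN : finrank K V = N) (W : Submodule K V) :
    ∃ (v : Basis (Fin N) K V) (J : Finset (Fin N)),
      J.card = finrank K W ∧ Submodule.span K (v '' J) = W := by
  obtain ⟨C, hC⟩ := W.exists_isCompl
  have hdim : finrank K W + finrank K C = N := hN ▸ Submodule.finrank_add_eq_of_isCompl hC
  let e := finSumFinEquiv.trans (finCongr hdim)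
  let v := (((finBasis K W).prod (finBasis K C)).map
    (Submodule.prodEquivOfIsCompl W C hC)).reindex e
  let J := Finset.univ.map ((Fin.castAddEmb _).trans (finCongr hdim).toEmbedding)
  refine ⟨v, J, by simp [J], ?_⟩
  have : v '' J = W.subtype '' Set.range (finBasis K W) := by
    ext x
    simp [v, e, J, Submodule.coe_prodEquivOfIsCompl']
  rw [this, Submodule.span_image, (finBasis K W).span_eq, Submodule.map_subtype_top]

theorem Submodule.exists_basis_adapted_inf {K V : Type*} [Field K] [AddCommGroup V] [Module K V]
    {A : Submodule K V} [FiniteDimensional K A] {a : ℕ} (hA : finrank K A = a)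
    (W : Submodule K V) :
    ∃ (u : Basis (Fin a) K A) (s : Finset (Fin a)),
      s.card = finrank K ↥(A ⊓ W) ∧ ∀ k ∈ s, (u k : V) ∈ W := by
  obtain ⟨u, s, hs, hspan⟩ := (W.comap A.subtype).exists_basis_span_image_eq hA
  refine ⟨u, s, ?_, fun k hk => ?_⟩
  · rw [hs, ← Submodule.finrank_map_subtype_eq, Submodule.map_comap_subtype]
  · have : u k ∈ W.comap A.subtype := hspan ▸ Submodule.subset_span (Set.mem_image_of_mem u hk)
    exact this

theorem Set.powersetCard.card_filter_ofFinEmbEquiv_symm_mem {I : Type*} [LinearOrder I] {a : ℕ}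
    (S : Set.powersetCard I a) (J : Finset I) :
    (Finset.univ.filter fun k => ofFinEmbEquiv.symm S k ∈ J).card =
      ((S : Finset I) ∩ J).card := by
  classical
  rw [← Finset.card_map (ofFinEmbEquiv.symm S).toEmbedding]
  congr 1
  ext i
  simp only [Finset.mem_map, Finset.mem_filter, Finset.mem_univ, true_and, Finset.mem_inter,
    RelEmbedding.coe_toEmbedding]
  constructor
  · rintro ⟨k, hk, rfl⟩
    exact ⟨(mem_range_ofFinEmbEquiv_symm_iff_mem S _).mp ⟨k, rfl⟩, hk⟩
  · rintro ⟨hiS, hiJ⟩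
    obtain ⟨k, rfl⟩ := (mem_range_ofFinEmbEquiv_symm_iff_mem S _).mpr hiS
    exact ⟨k, hiJ, rfl⟩

theorem AlternatingMap.apply_eq_sum_exteriorPower_repr_smul {K V N I : Type*} [Field K]
    [AddCommGroup V] [Module K V] [AddCommGroup N] [Module K N] [LinearOrder I] [Fintype I]
    {a : ℕ} (v : Basis I K V) (f : V [⋀^Fin a]→ₗ[K] N) (x : Fin a → V) :
    f x = ∑ S, (v.exteriorPower a).repr (exteriorPower.ιMulti K a x) S •
      f (v ∘ ofFinEmbEquiv.symm S) := by
  let F := exteriorPower.alternatingMapLinearEquiv f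
  have hF : ∀ y, F (exteriorPower.ιMulti K a y) = f y :=
    exteriorPower.alternatingMapLinearEquiv_apply_ιMulti f
  conv_lhs => rw [← hF, ← (v.exteriorPower a).sum_repr (exteriorPower.ιMulti K a x), map_sum]
  simp only [map_smul, exteriorPower.basis_apply, exteriorPower.ιMulti_family, hF]

theorem AlternatingMap.map_comp_ofFinEmbEquiv_symm_eq_zero {K M N I : Type*} [Field K]
    [AddCommGroup M] [Module K M] [AddCommGroup N] [Module K N] [LinearOrder I] {a : ℕ}
    (f : M [⋀^Fin a]→ₗ[K] N) {v : I → M} {J : Finset I} {p : Submodule K M}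
    [FiniteDimensional K p] (hv : ∀ r ∈ J, v r ∈ p) (S : Set.powersetCard I a)
    (hS : finrank K p < ((S : Finset I) ∩ J).card) : f (v ∘ ofFinEmbEquiv.symm S) = 0 := by
  classical
  refine f.map_eq_zero_of_finrank_lt_card
    (s := Finset.univ.filter fun k => ofFinEmbEquiv.symm S k ∈ J)
    (fun k hk => hv _ (Finset.mem_filter.mp hk).2) ?_
  rwa [card_filter_ofFinEmbEquiv_symm_mem]

theorem exteriorPower.basis_repr_ιMulti_eq_zero {K V I : Type*} [Field K]
    [AddCommGroup V] [Module K V] [LinearOrder I] {a : ℕ} (v : Basis I K V) (J : Finset I)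
    {u : Fin a → V} {s : Finset (Fin a)} (hu : ∀ k ∈ s, u k ∈ Submodule.span K (v '' J))
    (S : Set.powersetCard I a) (hS : ((S : Finset I) ∩ J).card < s.card) :
    (v.exteriorPower a).repr (exteriorPower.ιMulti K a u) S = 0 := by
  classical
  rw [exteriorPower.basis_repr_apply, exteriorPower.ιMultiDual_apply_ιMulti]
  refine Matrix.det_eq_zero_of_card_lt _ (R := s)
    (C := Finset.univ.filter fun k => ofFinEmbEquiv.symm S k ∈ J)
    (fun k hk j hj => ?_) (by rwa [card_filter_ofFinEmbEquiv_symm_mem])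
  have := (v.mem_span_image).mp (hu k hk)
  simp only [Finset.mem_filter, Finset.mem_univ, true_and] at hj
  by_contra h
  exact hj (this (Finsupp.mem_support_iff.mpr (by simpa using h)))

theorem Module.Basis.det_mkQ_eq_sum_exteriorPower_repr_mul {K V I : Type*} [Field K]
    [AddCommGroup V] [Module K V] [FiniteDimensional K V] [LinearOrder I] [Fintype I]
    {a lo hi : ℕ} (v : Basis I K V) {J : Finset I} {W B : Submodule K V}
    (hvJ : Submodule.span K (v '' J) = W) (bq : Basis (Fin a) K (V ⧸ B)) {u : Fin a → V}
    {s : Finset (Fin a)} (hu : ∀ k ∈ s, u k ∈ W) (hlo : lo ≤ s.card)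
    (hhi : finrank K (W.map B.mkQ) ≤ hi) :
    bq.det (fun k => B.mkQ (u k)) =
      ∑ S : {S : Set.powersetCard I a // lo ≤ ((S : Finset I) ∩ J).card ∧
          ((S : Finset I) ∩ J).card ≤ hi},
        (v.exteriorPower a).repr (exteriorPower.ιMulti K a u) S *
          bq.det (fun k => B.mkQ (v (ofFinEmbEquiv.symm S.1 k))) := by
  classical
  have hexp := (bq.det.compLinearMap B.mkQ).apply_eq_sum_exteriorPower_repr_smul v u
  simp only [AlternatingMap.compLinearMap_apply, smul_eq_mul, Function.comp_apply] at hexp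
  rw [hexp, ← Finset.sum_filter_of_ne (p := fun S : Set.powersetCard I a =>
    lo ≤ ((S : Finset I) ∩ J).card ∧ ((S : Finset I) ∩ J).card ≤ hi),
    Finset.sum_subtype _ (fun S => Finset.mem_filter_univ S)]
  intro S _ hS
  by_contra hP
  rcases Nat.lt_or_ge ((S : Finset I) ∩ J).card lo with hlt | hge
  · refine hS (mul_eq_zero_of_left ?_ _)
    exact exteriorPower.basis_repr_ιMulti_eq_zero v J (fun k hk => hvJ ▸ hu k hk) S (by omega)
  · refine hS (mul_eq_zero_of_right _ (bq.det.map_comp_ofFinEmbEquiv_symm_eq_zero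
      (J := J) (p := W.map B.mkQ) (fun r hr => Submodule.mem_map_of_mem ?_) S (by omega)))
    exact hvJ ▸ Submodule.subset_span (Set.mem_image_of_mem v hr)

theorem card_powersetCard_inter_mem_Icc_le {α : Type*} [Fintype α] [DecidableEq α]
    (J : Finset α) (a lo hi : ℕ) :
    Fintype.card {S : Set.powersetCard α a //
        lo ≤ ((S : Finset α) ∩ J).card ∧ ((S : Finset α) ∩ J).card ≤ hi} ≤
      ∑ k ∈ Finset.range (hi - lo + 1),
        J.card.choose (lo + k) * (Fintype.card α - J.card).choose (a - lo - k) := by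
  let T := (Finset.range (hi - lo + 1)).sigma
    fun k => J.powersetCard (lo + k) ×ˢ Jᶜ.powersetCard (a - lo - k)
  have hT : T.card = ∑ k ∈ Finset.range (hi - lo + 1),
      J.card.choose (lo + k) * (Fintype.card α - J.card).choose (a - lo - k) := by
    simp [T, Finset.card_sigma, Finset.card_product, Finset.card_compl]
  have hmem : ∀ S : {S : Set.powersetCard α a //
      lo ≤ ((S : Finset α) ∩ J).card ∧ ((S : Finset α) ∩ J).card ≤ hi},
      (⟨((S.1 : Finset α) ∩ J).card - lo, ((S.1 : Finset α) ∩ J, (S.1 : Finset α) \ J)⟩ :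
        Σ _ : ℕ, Finset α × Finset α) ∈ T := by
    rintro ⟨S, hlo, hhi⟩
    have hsplit := Finset.card_inter_add_card_sdiff (S : Finset α) J
    have hS : (S : Finset α).card = a := S.2
    simp only [T, Finset.mem_sigma, Finset.mem_range, Finset.mem_product,
      Finset.mem_powersetCard]
    refine ⟨by omega, ⟨Finset.inter_subset_right, by omega⟩, ⟨?_, by omega⟩⟩
    intro x hx
    simpa using (Finset.mem_sdiff.mp hx).2
  rw [← hT, ← Fintype.card_coe]
  refine Fintype.card_le_of_injective (fun S => ⟨_, hmem S⟩) fun S S' h => ?_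
  simp only [Subtype.mk.injEq, Sigma.mk.injEq, heq_eq_eq, Prod.mk.injEq] at h
  apply Subtype.ext; apply Subtype.ext
  rw [← Finset.sdiff_union_inter (S.1 : Finset α) J,
    ← Finset.sdiff_union_inter (S'.1 : Finset α) J, h.2.1, h.2.2]

theorem singular_skew_bollobas_special_general (n l m a a₀ b b₀ : ℕ)
    (hnl : n + l = a + b)
    (W : Submodule ℝ (Fin (n + l) → ℝ)) (hW : Module.finrank ℝ ↥W = l)
    (A B : Fin m → Submodule ℝ (Fin (n + l) → ℝ))
    (hA : ∀ i, Module.finrank ℝ ↥(A i) = a)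
    (hAW : ∀ i, Module.finrank ℝ ↥(A i ⊓ W) = a₀)
    (hB : ∀ i, Module.finrank ℝ ↥(B i) = b)
    (hBW : ∀ i, Module.finrank ℝ ↥(B i ⊓ W) = b₀)
    (hdisj : ∀ i, A i ⊓ B i = ⊥)
    (hcross : ∀ i j : Fin m, i < j → A i ⊓ B j ≠ ⊥) :
    m ≤ ∑ k ∈ Finset.range (l - a₀ - b₀ + 1),
      l.choose (a₀ + k) * (a + b - l).choose (a - a₀ - k) := by
  classical
  obtain ⟨v, J, hJ, hvJ⟩ := W.exists_basis_span_image_eq (finrank_fin_fun ℝ)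
  choose u s hs huW using fun i => Submodule.exists_basis_adapted_inf (hA i) W
  have hQ : ∀ j, finrank ℝ ((Fin (n + l) → ℝ) ⧸ B j) = a := fun j => by
    rw [Submodule.finrank_quotient, finrank_fin_fun, hB j]
    omega
  let bq j := finBasisOfFinrankEq ℝ _ (hQ j)
  let P : Set.powersetCard (Fin (n + l)) a → Prop := fun S =>
    a₀ ≤ ((S : Finset _) ∩ J).card ∧ ((S : Finset _) ∩ J).card ≤ l - b₀
  let X : Matrix (Fin m) (Subtype P) ℝ := fun i S =>
    (v.exteriorPower a).repr (exteriorPower.ιMulti ℝ a fun k => (u i k : _)) S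
  let Y : Matrix (Subtype P) (Fin m) ℝ := fun S j =>
    (bq j).det fun k => (B j).mkQ (v (ofFinEmbEquiv.symm S.1 k))
  have hXY : ∀ i j, (X * Y) i j = (bq j).det fun k => (B j).mkQ (u i k) := fun i j => by
    have hrank := (B j).finrank_map_mkQ_add_finrank_inf W
    rw [hBW j, hW] at hrank
    exact (Basis.det_mkQ_eq_sum_exteriorPower_repr_mul v hvJ (bq j) (huW i)
      (hs i ▸ (hAW i).ge) (by omega)).symm
  have htri : (X * Y).IsLowerTriangular := fun i j hij => by
    have hnd : ¬Disjoint (A i) (B j) := by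
      simpa [disjoint_iff] using hcross i j (OrderDual.toDual_lt_toDual.mp hij)
    simpa [hXY] using ((bq j).det_mkQ_ne_zero_iff_disjoint (u i)).not.mpr hnd
  have hdiag : ∀ i, (X * Y) i i ≠ 0 := fun i => by
    rw [hXY]
    exact ((bq i).det_mkQ_ne_zero_iff_disjoint (u i)).mpr (disjoint_iff.mpr (hdisj i))
  calc m = Fintype.card (Fin m) := (Fintype.card_fin m).symm
    _ ≤ Fintype.card (Subtype P) := Matrix.card_le_card_of_isLowerTriangular_mul X Y htri hdiag
    _ ≤ _ := by
      have := card_powersetCard_inter_mem_Icc_le J a a₀ (l - b₀)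
      rwa [Fintype.card_fin, hJ, hW, show n + l - l = a + b - l by omega,
        show l - b₀ - a₀ = l - a₀ - b₀ by omega] at this

theorem singular_skew_bollobas_special (n l m a a₀ b b₀ : ℕ)
    (hnl : n + l = a + b)
    (W : Submodule ℝ (Fin (n + l) → ℝ)) (hW : Module.finrank ℝ ↥W = l)
    (A B : Fin m → Submodule ℝ (Fin (n + l) → ℝ))
    (hA : ∀ i, Module.finrank ℝ ↥(A i) = a)
    (hAW : ∀ i, Module.finrank ℝ ↥(A i ⊓ W) = a₀)
    (hB : ∀ i, Module.finrank ℝ ↥(B i) = b)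
    (hBW : ∀ i, Module.finrank ℝ ↥(B i ⊓ W) = b₀)
    (hdisj : ∀ i, A i ⊓ B i = ⊥)
    (hcross : ∀ i j : Fin m, i < j → A i ⊓ B j ≠ ⊥)
    (hl : l ≤ min (a₀ + b) (a + b₀)) :
    m ≤ ∑ k ∈ Finset.range (l - a₀ - b₀ + 1),
      l.choose (a₀ + k) * (a + b - l).choose (a - a₀ - k) :=
  singular_skew_bollobas_special_general n l m a a₀ b b₀ hnl W hW A B hA hAW hB hBW hdisj hcross
end

section
/- Let u_1,...,u_m and v_1,...,v_m be vectors in a real vector space equipped with a bilinear (wedge) pairing into another space, such that u_i ∧ v_i ≠ 0 for all i and u_i ∧ v_j = 0 for all i < j. Then u_1,...,u_m are linearly independent. -/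
theorem skew_triangular_independence {U V W : Type*}
    [AddCommGroup U] [Module ℝ U] [AddCommGroup V] [Module ℝ V]
    [AddCommGroup W] [Module ℝ W]
    (f : U →ₗ[ℝ] V →ₗ[ℝ] W) (m : ℕ) (u : Fin m → U) (v : Fin m → V)
    (hdiag : ∀ i, f (u i) (v i) ≠ 0)
    (hskew : ∀ i j : Fin m, i < j → f (u i) (v j) = 0) :
    LinearIndependent ℝ u := by
  rw [Fintype.linearIndependent_iff]
  intro c hc
  by_contra h
  push_neg at h
  have hS : (Finset.univ.filter fun i => c i ≠ 0).Nonempty := by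
    obtain ⟨i, hi⟩ := h
    exact ⟨i, by simp [hi]⟩
  obtain ⟨j, hj, hjmax⟩ := (Finset.univ.filter fun i => c i ≠ 0).exists_max_image id hS
  simp only [Finset.mem_filter, Finset.mem_univ, true_and] at hj hjmax
  have h0 : (f.flip (v j)) (∑ i, c i • u i) = 0 := by rw [hc]; simp
  rw [map_sum] at h0
  have hterm : ∀ i ∈ Finset.univ, (f.flip (v j)) (c i • u i) =
      if i = j then c j • f (u j) (v j) else 0 := by
    intro i _
    by_cases hij : i = j
    · simp [hij]
    · rcases lt_or_gt_of_ne hij with hlt | hgt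
      · simp [hij, LinearMap.flip_apply, hskew i j hlt]
      · have : c i = 0 := by
          by_contra hci
          exact absurd (hjmax i hci) (not_le_of_gt hgt)
        simp [hij, this]
  rw [Finset.sum_congr rfl hterm, Finset.sum_ite_eq' Finset.univ j] at h0
  simp only [Finset.mem_univ, if_true] at h0
  have := hdiag j
  rcases smul_eq_zero.mp h0 with h1 | h1
  · exact hj h1
  · exact this h1
end

section
/- Let V and W be vector spaces over a field F with dim V = n, dim W = k ≤ n, and let U_1,...,U_m be subspaces of V with dim U_i = r_i. If |F| > (n-k)(m+1), then there exists a linear map φ : V → W such that dim(φ(U_i)) = min(r_i, k) for all i. -/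
/-!
Take a subspace `P` of dimension `n - k` in general position with every `U i`, i.e.
`dim (P ⊔ U i) = min n (n - k + r i)`, and let `φ` be `V → V ⧸ P ≃ W`. Its kernel is `P`, so
`dim φ(U i) = dim (P ⊔ U i) - dim P = min (r i) k`. Such a `P` is built one vector at a time:
a vector outside `P` and outside every proper `P ⊔ U i` exists because a vector space over `F`
is not a union of at most `m + 1 < |F|` proper subspaces, and adjoining it preserves general
position.
-/

open Module Submodule

section

variable {K V W : Type*} [Field K] [AddCommGroup V] [Module K V] [AddCommGroup W] [Module K W]

lemma LinearMap.finrank_map_add_finrank_inf_ker [FiniteDimensional K V] (φ : V →ₗ[K] W)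
    (U : Submodule K V) :
    finrank K (U.map φ) + finrank K ↥(U ⊓ LinearMap.ker φ) = finrank K U := by
  have := (φ.domRestrict U).finrank_range_add_finrank_ker
  rwa [LinearMap.range_domRestrict, LinearMap.ker_domRestrict,
    ← U.finrank_map_subtype_eq, map_comap_subtype] at this

lemma Submodule.exists_forall_notMem_of_card_lt {ι : Type*} [Fintype ι] (p : ι → Submodule K V)
    (hK : (Fintype.card ι : Cardinal) < Cardinal.mk K) : ∃ v : V, ∀ i, p i ≠ ⊤ → v ∉ p i := by
  have hcard : (Finset.univ : Finset {i // p i ≠ ⊤}).card < ENat.card K := by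
    rw [ENat.card, Finset.card_univ, Cardinal.natCast_lt_toENat]
    exact lt_of_le_of_lt (by exact_mod_cast Fintype.card_subtype_le _) hK
  obtain ⟨v, -, hv⟩ := Set.exists_of_ssubset <|
    iUnion_ssubset_of_forall_ne_top_of_card_lt _ (fun i : {i // p i ≠ ⊤} ↦ p i) (·.2) hcard
  exact ⟨v, fun i hi hvi ↦ hv (Set.mem_biUnion (Finset.mem_univ ⟨i, hi⟩) hvi)⟩

namespace Submodule

def InGeneralPosition (P U : Submodule K V) : Prop :=
  finrank K ↥(P ⊔ U) = min (finrank K V) (finrank K P + finrank K U)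

variable [FiniteDimensional K V] {P U : Submodule K V}

lemma inGeneralPosition_bot_left (U : Submodule K V) : InGeneralPosition ⊥ U := by
  rw [InGeneralPosition, bot_sup_eq, finrank_bot, zero_add, min_eq_right (finrank_le U)]

lemma InGeneralPosition.sup_span_singleton (h : InGeneralPosition P U) {v : V} (hvP : v ∉ P)
    (hvPU : P ⊔ U ≠ ⊤ → v ∉ P ⊔ U) : InGeneralPosition (P ⊔ span K {v}) U := by
  rw [InGeneralPosition] at h ⊢
  rw [finrank_sup_span_singleton hvP]
  by_cases htop : P ⊔ U = ⊤
  · have htop' : P ⊔ span K {v} ⊔ U = ⊤ :=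
      top_le_iff.mp (htop ▸ sup_le_sup_right le_sup_left U)
    rw [htop, finrank_top] at h
    rw [htop', finrank_top]
    omega
  · have hlt := finrank_lt htop
    rw [sup_right_comm, finrank_sup_span_singleton (hvPU htop)]
    omega

variable {ι : Type*} [Fintype ι]

lemma exists_finrank_succ_inGeneralPosition (U : ι → Submodule K V)
    (hK : (Fintype.card ι + 1 : ℕ) < Cardinal.mk K) (hP : P ≠ ⊤)
    (hPU : ∀ i, InGeneralPosition P (U i)) :
    ∃ Q : Submodule K V, finrank K Q = finrank K P + 1 ∧ ∀ i, InGeneralPosition Q (U i) := by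
  obtain ⟨v, hv⟩ := exists_forall_notMem_of_card_lt (fun o : Option ι ↦ o.elim P (P ⊔ U ·))
    (by rwa [Fintype.card_option])
  have hvP : v ∉ P := hv none hP
  exact ⟨P ⊔ span K {v}, finrank_sup_span_singleton hvP,
    fun i ↦ (hPU i).sup_span_singleton hvP (hv (some i))⟩

lemma exists_finrank_eq_inGeneralPosition (U : ι → Submodule K V) {d : ℕ}
    (hd : d ≤ finrank K V) (hK : (d * (Fintype.card ι + 1) : ℕ) < Cardinal.mk K) :
    ∃ P : Submodule K V, finrank K P = d ∧ ∀ i, InGeneralPosition P (U i) := by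
  induction d with
  | zero => exact ⟨⊥, finrank_bot K V, fun i ↦ inGeneralPosition_bot_left (U i)⟩
  | succ d ih =>
    have hK' : ((Fintype.card ι + 1 : ℕ) : Cardinal) < Cardinal.mk K :=
      lt_of_le_of_lt (by exact_mod_cast Nat.le_mul_of_pos_left _ d.succ_pos) hK
    obtain ⟨P, hPd, hPU⟩ := ih (by omega)
      (lt_of_le_of_lt (by exact_mod_cast Nat.mul_le_mul_right _ d.le_succ) hK)
    have hP : P ≠ ⊤ := fun h ↦ by rw [h, finrank_top] at hPd; omega
    obtain ⟨Q, hQ, hQU⟩ := exists_finrank_succ_inGeneralPosition U hK' hP hPU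
    exact ⟨Q, hQ.trans (congrArg (· + 1) hPd), hQU⟩

end Submodule

end

theorem general_position_exists (F : Type*) [Field F]
    {V W : Type*} [AddCommGroup V] [Module F V] [AddCommGroup W] [Module F W]
    [FiniteDimensional F V] [FiniteDimensional F W]
    (n k m : ℕ) (hV : Module.finrank F V = n) (hW : Module.finrank F W = k)
    (hkn : k ≤ n) (U : Fin m → Submodule F V) (r : Fin m → ℕ)
    (hU : ∀ i, Module.finrank F ↥(U i) = r i)
    (hF : ((n - k) * (m + 1) : ℕ) < Cardinal.mk F) :
    ∃ φ : V →ₗ[F] W, ∀ i, Module.finrank F ↥((U i).map φ) = min (r i) k := by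
  obtain ⟨P, hP, hPU⟩ := exists_finrank_eq_inGeneralPosition U (d := n - k) (by omega)
    (by rwa [Fintype.card_fin])
  have hquot : finrank F (V ⧸ P) = finrank F W := by
    have := P.finrank_quotient_add_finrank
    omega
  obtain ⟨e⟩ := FiniteDimensional.nonempty_linearEquiv_of_finrank_eq hquot
  have hker : LinearMap.ker (e.toLinearMap ∘ₗ P.mkQ) = P := by
    rw [LinearEquiv.ker_comp, ker_mkQ]
  refine ⟨e.toLinearMap ∘ₗ P.mkQ, fun i ↦ ?_⟩
  have hrank := (e.toLinearMap ∘ₗ P.mkQ).finrank_map_add_finrank_inf_ker (U i)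
  have hdim := finrank_sup_add_finrank_inf_eq P (U i)
  have hgen := hPU i
  rw [InGeneralPosition, hV, hP, hU i] at hgen
  rw [hker, inf_comm, hU i] at hrank
  rw [hP, hU i] at hdim
  omega
end
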